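/- Let f : ℝ² → ℝ, (x, y) ↦ f(x,y), be D₁-Lipschitz in x (uniformly in y), let μ > 0, and let f_μ(x,y) = E[f(x + μξ, y)] with ξ ∼ N(0,1). Then the partial derivative ∂f_μ/∂x exists and is Lipschitz in x with constant D₁/μ: |∂_x f_μ(x,y) − ∂_x f_μ(x',y)| ≤ (D₁/μ)·|x − x'|. -/

import Mathlib

/-!
Since `x + μξ ∼ N(x, μ²)`, `f_μ(x) = ∫ p_{x,μ²}(s) f(s) ds`, and the Gaussian density is
smooth in its mean: `∂ₓ p_{x,μ²}(s) = (s - x)/μ² · p_{x,μ²}(s)`. Near `x₀` this derivative is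
dominated by `exp (c|s - x₀|) · p_{x₀,μ²}(s)`, which is integrable because Gaussians have all
exponential moments, so one may differentiate under the integral: `∂ₓ f_μ(x) = μ⁻¹ E[ξ f(x + μξ)]`.
Then `|∂ₓ f_μ(x) - ∂ₓ f_μ(x')| ≤ μ⁻¹ D₁ |x - x'| E|ξ|`, and `E|ξ| ≤ E[(1 + ξ²)/2] = 1`.
-/

open MeasureTheory ProbabilityTheory Real
open scoped NNReal

lemma integrable_gaussianReal_iff {m : ℝ} {v : ℝ≥0} (hv : v ≠ 0) {g : ℝ → ℝ} :
    Integrable g (gaussianReal m v) ↔ Integrable (fun s => gaussianPDFReal m v s * g s) := by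
  rw [gaussianReal_of_var_ne_zero _ hv, integrable_withDensity_iff_integrable_smul'
    (measurable_gaussianPDF _ _) (ae_of_all _ fun _ => gaussianPDF_lt_top)]
  simp only [toReal_gaussianPDF, smul_eq_mul]

lemma integrable_gaussianPDFReal_mul_exp_mul_abs_sub {v : ℝ≥0} (hv : v ≠ 0) (m c : ℝ) :
    Integrable (fun s => gaussianPDFReal m v s * exp (c * |s - m|)) := by
  have hexp (b : ℝ) : Integrable (fun s => exp (b * (s - m))) (gaussianReal m v) :=
    ((integrable_exp_mul_gaussianReal b).const_mul (exp (-(b * m)))).congr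
      (ae_of_all _ fun s => by simp only [← exp_add]; ring_nf)
  exact (integrable_gaussianReal_iff hv).1
    (integrable_exp_mul_abs (X := fun s => s - m) (hexp c) (hexp (-c)))

lemma integrable_abs_gaussianReal (m : ℝ) (v : ℝ≥0) :
    Integrable (fun t => |t|) (gaussianReal m v) :=
  ((memLp_id_gaussianReal 1).integrable le_rfl).abs

lemma integrable_sq_gaussianReal (m : ℝ) (v : ℝ≥0) :
    Integrable (fun t => t ^ 2) (gaussianReal m v) :=
  (memLp_id_gaussianReal 2).integrable_sq

lemma integral_abs_gaussianReal_zero_one_le_one : ∫ t, |t| ∂gaussianReal 0 1 ≤ 1 := by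
  have hsq : ∫ t, t ^ 2 ∂gaussianReal 0 1 = 1 := by
    have := variance_fun_id_gaussianReal (μ := 0) (v := 1)
    rw [variance_eq_integral measurable_id'.aemeasurable] at this
    simpa using this
  calc ∫ t, |t| ∂gaussianReal 0 1 ≤ ∫ t, (1 + t ^ 2) / 2 ∂gaussianReal 0 1 :=
        integral_mono (integrable_abs_gaussianReal 0 1)
          (((integrable_const 1).add (integrable_sq_gaussianReal 0 1)).div_const 2)
          fun t => by nlinarith [sq_abs t, sq_nonneg (|t| - 1)]
    _ = 1 := by
        rw [integral_div, integral_add (integrable_const 1) (integrable_sq_gaussianReal 0 1), hsq]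
        norm_num

lemma hasDerivAt_gaussianPDFReal_mean (v : ℝ≥0) (m s : ℝ) :
    HasDerivAt (fun x => gaussianPDFReal x v s) ((s - m) / v * gaussianPDFReal m v s) m := by
  have h : HasDerivAt (fun x => -(s - x) ^ 2 / (2 * v)) ((s - m) / v) m :=
    ((((hasDerivAt_id m).const_sub s).pow 2).neg.div_const (2 * (v : ℝ))).congr_deriv
      (by simp only [id]; ring)
  exact (h.exp.const_mul (√(2 * π * v))⁻¹).congr_deriv (by rw [gaussianPDFReal]; ring)

lemma gaussianPDFReal_le_exp_mul_gaussianPDFReal (v : ℝ≥0) {x m : ℝ} (hx : |x - m| ≤ 1)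
    (s : ℝ) : gaussianPDFReal x v s ≤ exp (|s - m| / v) * gaussianPDFReal m v s := by
  have hcross : (s - m) * (x - m) ≤ |s - m| :=
    (le_abs_self _).trans (by rw [abs_mul]; exact mul_le_of_le_one_right (abs_nonneg _) hx)
  have hsq : -(s - x) ^ 2 ≤ 2 * |s - m| - (s - m) ^ 2 := by nlinarith [sq_nonneg (x - m)]
  simp only [gaussianPDFReal]
  rw [mul_left_comm, ← exp_add]
  gcongr
  calc -(s - x) ^ 2 / (2 * v) ≤ (2 * |s - m| - (s - m) ^ 2) / (2 * v) := by gcongr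
    _ = |s - m| / v + -(s - m) ^ 2 / (2 * v) := by ring

lemma norm_deriv_gaussianPDFReal_mean_mul_le {v : ℝ≥0} {φ : ℝ → ℝ} {x₀ C c : ℝ}
    (hgrowth : ∀ s, |φ s| ≤ C * exp (c * |s - x₀|)) {x : ℝ} (hx : |x - x₀| ≤ 1) (s : ℝ) :
    ‖(s - x) / v * gaussianPDFReal x v s * φ s‖ ≤
      C / v * (gaussianPDFReal x₀ v s * exp ((1 + 1 / v + c) * |s - x₀|)) := by
  have hdist : |s - x| ≤ exp |s - x₀| := by
    linarith [abs_sub_le s x₀ x, abs_sub_comm x x₀, add_one_le_exp |s - x₀|]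
  have hpdf_le := gaussianPDFReal_le_exp_mul_gaussianPDFReal v hx s
  have hpdf₀ := gaussianPDFReal_nonneg x₀ v s
  calc ‖(s - x) / v * gaussianPDFReal x v s * φ s‖
      = |s - x| / v * gaussianPDFReal x v s * |φ s| := by
        rw [Real.norm_eq_abs, abs_mul, abs_mul, abs_div, NNReal.abs_eq,
          abs_of_nonneg (gaussianPDFReal_nonneg _ _ _)]
    _ ≤ exp |s - x₀| / v * (exp (|s - x₀| / v) * gaussianPDFReal x₀ v s) *
          (C * exp (c * |s - x₀|)) :=
        mul_le_mul (mul_le_mul (by gcongr) hpdf_le (gaussianPDFReal_nonneg _ _ _)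
          (by positivity)) (hgrowth s) (abs_nonneg _) (by positivity)
    _ = C / v * (gaussianPDFReal x₀ v s * exp ((1 + 1 / v + c) * |s - x₀|)) := by
        rw [show (1 + 1 / v + c) * |s - x₀| = |s - x₀| + |s - x₀| / v + c * |s - x₀| by ring,
          exp_add, exp_add]
        ring

theorem hasDerivAt_integral_gaussianPDFReal_mul {v : ℝ≥0} (hv : v ≠ 0) {φ : ℝ → ℝ}
    (hφ : AEStronglyMeasurable φ) {x₀ C c : ℝ}
    (hgrowth : ∀ s, |φ s| ≤ C * exp (c * |s - x₀|)) :
    HasDerivAt (fun x => ∫ s, gaussianPDFReal x v s * φ s)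
      (∫ s, (s - x₀) / v * gaussianPDFReal x₀ v s * φ s) x₀ := by
  have hpdf (x : ℝ) := (measurable_gaussianPDFReal x v).aestronglyMeasurable (μ := volume)
  have hint : Integrable (fun s => gaussianPDFReal x₀ v s * φ s) := by
    refine ((integrable_gaussianPDFReal_mul_exp_mul_abs_sub hv x₀ c).const_mul C).mono'
      ((hpdf x₀).mul hφ) (ae_of_all _ fun s => ?_)
    rw [norm_mul, Real.norm_of_nonneg (gaussianPDFReal_nonneg _ _ _), mul_left_comm]
    exact mul_le_mul_of_nonneg_left (hgrowth s) (gaussianPDFReal_nonneg _ _ _)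
  exact (hasDerivAt_integral_of_dominated_loc_of_deriv_le (Metric.ball_mem_nhds x₀ one_pos)
    (.of_forall fun x => (hpdf x).mul hφ) hint
    (((continuous_sub_right x₀).div_const _).aestronglyMeasurable.mul (hpdf x₀) |>.mul hφ)
    (ae_of_all _ fun s x hx => norm_deriv_gaussianPDFReal_mean_mul_le hgrowth
      (by simpa only [Metric.mem_ball, Real.dist_eq] using hx.le) s)
    ((integrable_gaussianPDFReal_mul_exp_mul_abs_sub hv x₀ _).const_mul _)
    (ae_of_all _ fun s x _ => (hasDerivAt_gaussianPDFReal_mean v x s).mul_const (φ s))).2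

section ChangeOfVariables

variable {E : Type*} [NormedAddCommGroup E] [NormedSpace ℝ E]

lemma gaussianReal_map_const_add_mul (x σ : ℝ) :
    (gaussianReal 0 1).map (fun t => x + σ * t) =
      gaussianReal x (.mk (σ ^ 2) (sq_nonneg σ)) := by
  have : (fun t => x + σ * t) = (x + ·) ∘ (σ * ·) := rfl
  rw [this, ← Measure.map_map (measurable_const_add x) (measurable_const_mul σ),
    gaussianReal_map_const_mul, gaussianReal_map_const_add]
  simp

lemma integral_comp_const_add_mul_gaussianReal {σ : ℝ} (hσ : σ ≠ 0) (x : ℝ) (g : ℝ → E) :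
    ∫ t, g (x + σ * t) ∂gaussianReal 0 1 =
      ∫ s, g s ∂gaussianReal x (.mk (σ ^ 2) (sq_nonneg σ)) := by
  rw [← gaussianReal_map_const_add_mul, MeasurableEmbedding.integral_map]
  exact (measurableEmbedding_addLeft x).comp (measurableEmbedding_mulLeft₀ hσ)

end ChangeOfVariables

noncomputable def gaussianSmoothing (σ : ℝ) (φ : ℝ → ℝ) (x : ℝ) : ℝ :=
  ∫ t, φ (x + σ * t) ∂gaussianReal 0 1

lemma NNReal.mk_sq_ne_zero {σ : ℝ} (hσ : σ ≠ 0) : NNReal.mk (σ ^ 2) (sq_nonneg σ) ≠ 0 := by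
  simpa [← NNReal.coe_ne_zero] using hσ

lemma gaussianSmoothing_eq_integral_gaussianPDFReal_mul {σ : ℝ} (hσ : σ ≠ 0) (φ : ℝ → ℝ) :
    gaussianSmoothing σ φ =
      fun x => ∫ s, gaussianPDFReal x (.mk (σ ^ 2) (sq_nonneg σ)) s * φ s := by
  ext x
  rw [gaussianSmoothing, integral_comp_const_add_mul_gaussianReal hσ,
    integral_gaussianReal_eq_integral_smul (NNReal.mk_sq_ne_zero hσ)]
  rfl

theorem hasDerivAt_gaussianSmoothing {σ : ℝ} (hσ : σ ≠ 0) {φ : ℝ → ℝ}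
    (hφ : AEStronglyMeasurable φ) {x C c : ℝ} (hgrowth : ∀ s, |φ s| ≤ C * exp (c * |s - x|)) :
    HasDerivAt (gaussianSmoothing σ φ) (σ⁻¹ * ∫ t, t * φ (x + σ * t) ∂gaussianReal 0 1) x := by
  have hv := NNReal.mk_sq_ne_zero hσ
  rw [gaussianSmoothing_eq_integral_gaussianPDFReal_mul hσ]
  convert hasDerivAt_integral_gaussianPDFReal_mul hv hφ hgrowth using 1
  calc σ⁻¹ * ∫ t, t * φ (x + σ * t) ∂gaussianReal 0 1
      = ∫ t, (x + σ * t - x) / σ ^ 2 * φ (x + σ * t) ∂gaussianReal 0 1 := by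
        rw [← integral_const_mul]
        congr with t
        field_simp
        ring
    _ = ∫ s, (s - x) / σ ^ 2 * φ s ∂gaussianReal x (.mk (σ ^ 2) (sq_nonneg σ)) :=
        integral_comp_const_add_mul_gaussianReal hσ x fun s => (s - x) / σ ^ 2 * φ s
    _ = _ := by
        rw [integral_gaussianReal_eq_integral_smul hv]
        congr with s
        simp only [NNReal.coe_mk, smul_eq_mul]
        ring

section Lipschitz

variable {φ : ℝ → ℝ} {D : ℝ}

lemma continuous_of_abs_sub_le_mul (hφ : ∀ s s', |φ s - φ s'| ≤ D * |s - s'|) :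
    Continuous φ :=
  (LipschitzWith.of_dist_le' (K := D) fun a b => by
    simpa only [Real.dist_eq] using hφ a b).continuous

lemma abs_le_mul_exp_of_abs_sub_le_mul (hφ : ∀ s s', |φ s - φ s'| ≤ D * |s - s'|) (x s : ℝ) :
    |φ s| ≤ (|φ x| + |D|) * exp |s - x| := by
  have hexp : |s - x| ≤ exp |s - x| := by linarith [add_one_le_exp |s - x|]
  have hone : 1 ≤ exp |s - x| := one_le_exp (abs_nonneg _)
  calc |φ s| ≤ |φ x| + D * |s - x| := by linarith [abs_sub_abs_le_abs_sub (φ s) (φ x), hφ s x]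
    _ ≤ |φ x| + |D| * |s - x| := by gcongr; exact le_abs_self D
    _ ≤ (|φ x| + |D|) * exp |s - x| := by nlinarith [abs_nonneg (φ x), abs_nonneg D]

lemma integrable_mul_comp_const_add_mul_of_abs_sub_le_mul
    (hφ : ∀ s s', |φ s - φ s'| ≤ D * |s - s'|) (x σ : ℝ) :
    Integrable (fun t => t * φ (x + σ * t)) (gaussianReal 0 1) := by
  refine (((integrable_abs_gaussianReal 0 1).const_mul |φ x|).add
    ((integrable_sq_gaussianReal 0 1).const_mul (D * |σ|))).mono'
    (by have := continuous_of_abs_sub_le_mul hφ; fun_prop) (ae_of_all _ fun t => ?_)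
  have := hφ (x + σ * t) x
  rw [add_sub_cancel_left, abs_mul] at this
  show |t * φ (x + σ * t)| ≤ |φ x| * |t| + D * |σ| * t ^ 2
  rw [abs_mul, ← sq_abs t]
  nlinarith [abs_sub_abs_le_abs_sub (φ (x + σ * t)) (φ x), abs_nonneg t]

theorem hasDerivAt_gaussianSmoothing_of_abs_sub_le_mul {σ : ℝ} (hσ : σ ≠ 0)
    (hφ : ∀ s s', |φ s - φ s'| ≤ D * |s - s'|) (x : ℝ) :
    HasDerivAt (gaussianSmoothing σ φ) (σ⁻¹ * ∫ t, t * φ (x + σ * t) ∂gaussianReal 0 1) x :=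
  hasDerivAt_gaussianSmoothing hσ (continuous_of_abs_sub_le_mul hφ).aestronglyMeasurable (c := 1)
    fun s => by simpa only [one_mul] using abs_le_mul_exp_of_abs_sub_le_mul hφ x s

theorem abs_deriv_gaussianSmoothing_sub_le {σ : ℝ} (hσ : 0 < σ)
    (hφ : ∀ s s', |φ s - φ s'| ≤ D * |s - s'|) (x x' : ℝ) :
    |deriv (gaussianSmoothing σ φ) x - deriv (gaussianSmoothing σ φ) x'| ≤ D / σ * |x - x'| := by
  have hD : 0 ≤ D := by simpa using (abs_nonneg _).trans (hφ 1 0)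
  have hint := integrable_mul_comp_const_add_mul_of_abs_sub_le_mul hφ
  have hdiff : |∫ t, t * φ (x + σ * t) - t * φ (x' + σ * t) ∂gaussianReal 0 1| ≤ D * |x - x'| :=
    calc |∫ t, t * φ (x + σ * t) - t * φ (x' + σ * t) ∂gaussianReal 0 1|
        ≤ ∫ t, |t| * (D * |x - x'|) ∂gaussianReal 0 1 := by
          rw [← Real.norm_eq_abs]
          refine norm_integral_le_of_norm_le ((integrable_abs_gaussianReal 0 1).mul_const _)
            (ae_of_all _ fun t => ?_)
          have := hφ (x + σ * t) (x' + σ * t)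
          rw [add_sub_add_right_eq_sub] at this
          rw [Real.norm_eq_abs, ← mul_sub, abs_mul]
          gcongr
      _ = (∫ t, |t| ∂gaussianReal 0 1) * (D * |x - x'|) := integral_mul_const _ _
      _ ≤ D * |x - x'| :=
          mul_le_of_le_one_left (by positivity) integral_abs_gaussianReal_zero_one_le_one
  rw [(hasDerivAt_gaussianSmoothing_of_abs_sub_le_mul hσ.ne' hφ x).deriv,
    (hasDerivAt_gaussianSmoothing_of_abs_sub_le_mul hσ.ne' hφ x').deriv, ← mul_sub,
    ← integral_sub (hint x σ) (hint x' σ), abs_mul, abs_inv, abs_of_pos hσ, div_eq_inv_mul,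
    mul_assoc]
  gcongr

end Lipschitz

theorem stmt_17 (f : ℝ → ℝ → ℝ) (D₁ : ℝ)
    (hlip : ∀ y x x' : ℝ, |f x y - f x' y| ≤ D₁ * |x - x'|)
    (μ : ℝ) (hμ : 0 < μ)
    (fμ : ℝ → ℝ → ℝ)
    (hfμ : ∀ x y, fμ x y = ∫ t, f (x + μ * t) y ∂(gaussianReal 0 1)) :
    ∀ y : ℝ, (∀ x, DifferentiableAt ℝ (fun x => fμ x y) x) ∧
      ∀ x x' : ℝ, |deriv (fun x => fμ x y) x - deriv (fun x => fμ x y) x'| ≤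
        D₁ / μ * |x - x'| := by
  intro y
  have hfμy : (fun x => fμ x y) = gaussianSmoothing μ (fun s => f s y) :=
    funext fun x => hfμ x y
  rw [hfμy]
  exact ⟨fun x =>
    (hasDerivAt_gaussianSmoothing_of_abs_sub_le_mul hμ.ne' (hlip y) x).differentiableAt,
    abs_deriv_gaussianSmoothing_sub_le hμ (hlip y)⟩
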